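/- If n ∈ ℕ^{d×d} is supported on the edges of a *-forest G (i.e., n_{ij} = 0 unless {i,j} ∈ E(G)), then n is sourceless (Σ_j n_{ij} = Σ_j n_{ji} for all i) if and only if n is symmetric off the diagonal, i.e., n_{ij} = n_{ji} for all i ≠ j with {i,j} ∈ E(G). -/

import Mathlib

/-- for n ∈ ℕ^{d×d} supported on the edges (and self-loops) of a
*-forest (simple graph part acyclic, self-loops given by `loops`), n is
sourceless iff it is symmetric off the diagonal. -/
theorem sourceless_iff_symmetric_of_star_forest (d : ℕ)
    (G : SimpleGraph (Fin d)) (hforest : G.IsAcyclic) (loops : Fin d → Prop)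
    (n : Matrix (Fin d) (Fin d) ℕ)
    (hsupp : ∀ i j, n i j ≠ 0 → (i = j → loops i) ∧ (i ≠ j → G.Adj i j)) :
    (∀ i, ∑ j, n i j = ∑ j, n j i) ↔
      (∀ i j, i ≠ j → G.Adj i j → n i j = n j i) := by
  classical
  constructor
  · intro hs i j hij hadj
    have hb : G.IsBridge s(i, j) :=
      (SimpleGraph.isAcyclic_iff_forall_adj_isBridge.mp hforest) hadj
    set G' := G \ SimpleGraph.fromEdgeSet {s(i, j)} with hG'
    have hnr : ¬ G'.Reachable i j := SimpleGraph.isBridge_iff.mp hb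
    set A : Finset (Fin d) := Finset.univ.filter (fun a => G'.Reachable i a) with hA
    have hmemA : ∀ a, a ∈ A ↔ G'.Reachable i a := by
      intro a; simp [hA]
    set f : Fin d → Fin d → ℤ := fun a k => (n a k : ℤ) - (n k a : ℤ) with hf
    have hanti : ∀ a k, f a k = - f k a := by intro a k; simp only [hf]; ring
    have h1 : ∀ a, ∑ k, f a k = 0 := by
      intro a
      simp only [hf, Finset.sum_sub_distrib]
      rw [← Nat.cast_sum, ← Nat.cast_sum, hs a]
      ring
    -- key support claim
    have hclaim : ∀ a k, G'.Reachable i a → ¬ G'.Reachable i k →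
        s(a, k) ≠ s(i, j) → f a k = 0 := by
      intro a k ha hk hne
      have hak : a ≠ k := by rintro rfl; exact hk ha
      have hGadj : n a k ≠ 0 ∨ n k a ≠ 0 → G.Adj a k := by
        rintro (h | h)
        · exact (hsupp a k h).2 hak
        · exact ((hsupp k a h).2 hak.symm).symm
      have hG'adj : G.Adj a k → G'.Adj a k := by
        intro h
        rw [hG']
        refine ⟨h, ?_⟩
        simp only [SimpleGraph.fromEdgeSet_adj, Set.mem_singleton_iff]
        rintro ⟨h1, -⟩
        exact hne h1
      have hzero : n a k = 0 ∧ n k a = 0 := by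
        by_contra h
        have hadj' : G.Adj a k := by
          apply hGadj
          omega
        exact hk (ha.trans (hG'adj hadj').reachable)
      simp [hf, hzero.1, hzero.2]
    have hiA : i ∈ A := (hmemA i).mpr (SimpleGraph.Reachable.refl i)
    have hjA : j ∈ Aᶜ := by
      simp only [Finset.mem_compl, hmemA]
      exact hnr
    have hsplit : ∀ a, (∑ k ∈ A, f a k) + (∑ k ∈ Aᶜ, f a k) = ∑ k, f a k :=
      fun a => Finset.sum_add_sum_compl A _
    have hAA : ∑ a ∈ A, ∑ k ∈ A, f a k = 0 := by
      have h := Finset.sum_comm (s := A) (t := A) (f := fun a k => f a k)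
      have h2 : ∑ a ∈ A, ∑ k ∈ A, f a k = - ∑ a ∈ A, ∑ k ∈ A, f a k := by
        nth_rewrite 2 [h]
        rw [← Finset.sum_neg_distrib]
        apply Finset.sum_congr rfl
        intro a _
        rw [← Finset.sum_neg_distrib]
        apply Finset.sum_congr rfl
        intro k _
        exact hanti a k
      linarith
    have hAC : ∑ a ∈ A, ∑ k ∈ Aᶜ, f a k = f i j := by
      rw [Finset.sum_eq_single_of_mem i hiA]
      · rw [Finset.sum_eq_single_of_mem j hjA]
        intro k hk hkj
        refine hclaim i k ((hmemA i).mp hiA) ?_ ?_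
        · simpa [hmemA] using hk
        · intro h
          rw [Sym2.eq_iff] at h
          rcases h with ⟨-, rfl⟩ | ⟨rfl, -⟩
          · exact hkj rfl
          · exact hij rfl
      · intro a ha hai
        apply Finset.sum_eq_zero
        intro k hk
        refine hclaim a k ((hmemA a).mp ha) ?_ ?_
        · simpa [hmemA] using hk
        · intro h
          rw [Sym2.eq_iff] at h
          rcases h with ⟨rfl, -⟩ | ⟨rfl, -⟩
          · exact hai rfl
          · exact hnr ((hmemA a).mp ha)
    have htot : ∑ a ∈ A, ∑ k, f a k = 0 := by
      apply Finset.sum_eq_zero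
      intro a _
      exact h1 a
    have : f i j = 0 := by
      have h := htot
      calc f i j = (∑ a ∈ A, ∑ k ∈ A, f a k) + (∑ a ∈ A, ∑ k ∈ Aᶜ, f a k) := by
            rw [hAA, hAC]; ring
        _ = ∑ a ∈ A, ((∑ k ∈ A, f a k) + (∑ k ∈ Aᶜ, f a k)) := by
            rw [Finset.sum_add_distrib]
        _ = ∑ a ∈ A, ∑ k, f a k := by
            apply Finset.sum_congr rfl; intro a _; exact hsplit a
        _ = 0 := htot
    have : (n i j : ℤ) = (n j i : ℤ) := by simp [hf] at this; omega
    exact_mod_cast this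
  · intro hsym i
    apply Finset.sum_congr rfl
    intro j _
    by_cases hij : i = j
    · subst hij; rfl
    · by_cases hadj : G.Adj i j
      · exact hsym i j hij hadj
      · have h1 : n i j = 0 := by
          by_contra h
          exact hadj ((hsupp i j h).2 hij)
        have h2 : n j i = 0 := by
          by_contra h
          exact hadj ((hsupp j i h).2 (Ne.symm hij)).symm
        rw [h1, h2]
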